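/- arXiv:2106.09782 — 2 statements merged into one kernel-verified Lean document; each statement's English description precedes it below -/
import Mathlib

section
/- For fixed K_a, K_b, b > 0, the function a ↦ h(a) = (K_a/2)·(a/b − 1 + sqrt((a/b − 1)² + 4(K_b/K_a)(a/b))) is strictly monotonically increasing in a > 0. -/
/-- For fixed K_a, K_b, b > 0, the hydrogen ion concentration h(a) is strictly
increasing in a > 0. -/
theorem stmt_2 (Ka Kb b : ℝ) (hKa : 0 < Ka) (hKb : 0 < Kb) (hb : 0 < b) :
    StrictMonoOn
      (fun a : ℝ =>
        (Ka / 2) * (a / b - 1 + Real.sqrt ((a / b - 1) ^ 2 + 4 * (Kb / Ka) * (a / b))))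
      (Set.Ioi 0) := by
  intro a1 ha1 a2 ha2 h12
  simp only [Set.mem_Ioi] at ha1 ha2
  set c := Kb / Ka with hc
  have hc0 : 0 < c := div_pos hKb hKa
  set x := a1 / b with hxdef
  set y := a2 / b with hydef
  have hx : 0 < x := div_pos ha1 hb
  have hy : 0 < y := div_pos ha2 hb
  have hxy : x < y := by
    rw [hxdef, hydef]
    exact div_lt_div_of_pos_right h12 hb
  have hA : (0:ℝ) ≤ (x - 1) ^ 2 + 4 * c * x := by positivity
  have hB : (0:ℝ) ≤ (y - 1) ^ 2 + 4 * c * y := by positivity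
  set sB := Real.sqrt ((y - 1) ^ 2 + 4 * c * y) with hsB
  have hsB0 : 0 ≤ sB := Real.sqrt_nonneg _
  have hsB2 : sB ^ 2 = (y - 1) ^ 2 + 4 * c * y := Real.sq_sqrt hB
  have key : 1 - 2 * c - y < sB := by
    by_contra hcon
    push_neg at hcon
    nlinarith [sq_nonneg sB, mul_pos hc0 hy]
  have hz : 0 < y - x + sB := by nlinarith
  have main : Real.sqrt ((x - 1) ^ 2 + 4 * c * x) < y - x + sB := by
    rw [show ((x - 1) ^ 2 + 4 * c * x : ℝ) = (x - 1) ^ 2 + 4 * c * x from rfl]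
    rw [Real.sqrt_lt' hz]
    nlinarith
  show (Ka / 2) * (x - 1 + Real.sqrt ((x - 1) ^ 2 + 4 * c * x)) <
       (Ka / 2) * (y - 1 + sB)
  have hKa2 : 0 < Ka / 2 := by positivity
  apply mul_lt_mul_of_pos_left _ hKa2
  linarith
end

section
/- Given the water autoprotolysis equilibrium [OH⁻][H⁺] = K_w², the full electroneutrality condition β b − α a + h − K_w²/h = 0 with α = K_a/(K_a + h), β = h/(K_b + h) has at least one solution h > 0, for any positive parameters a, b, K_a, K_b, K_w. -/
/-! For `h > 0` both fractions `h / (K_b + h)` and `K_a / (K_a + h)` lie in `[0, 1]`, so the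
residual of the electroneutrality equation stays within `|a| + |b|` of `h - K_w² / h`. The latter
tends to `-∞` as `h → 0⁺` and to `+∞` as `h → ∞`, so the intermediate value theorem on
`(0, ∞)` produces a root. -/

open Filter Set Topology

theorem abs_div_mul_le_of_le {p q : ℝ} (x : ℝ) (hp : 0 ≤ p) (hpq : p ≤ q) :
    |p / q * x| ≤ |x| := by
  rw [abs_mul, abs_of_nonneg (div_nonneg hp (hp.trans hpq))]
  exact mul_le_of_le_one_left (abs_nonneg x) (div_le_one_of_le₀ hpq (hp.trans hpq))

theorem tendsto_add_sub_div_nhdsGT_zero (M : ℝ) {c : ℝ} (hc : 0 < c) :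
    Tendsto (fun h : ℝ => h + M - c / h) (𝓝[>] 0) atBot := by
  have hlin : Tendsto (fun h : ℝ => h + M) (𝓝[>] 0) (𝓝 (0 + M)) :=
    (tendsto_nhdsWithin_of_tendsto_nhds tendsto_id).add_const M
  have hinv : Tendsto (fun h : ℝ => -(c * h⁻¹)) (𝓝[>] 0) atBot :=
    tendsto_neg_atTop_atBot.comp (tendsto_inv_nhdsGT_zero.const_mul_atTop hc)
  simpa only [sub_eq_add_neg, div_eq_mul_inv, zero_add] using hlin.add_atBot hinv

theorem tendsto_sub_sub_div_atTop (M c : ℝ) :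
    Tendsto (fun h : ℝ => h - M - c / h) atTop atTop := by
  have hlin : Tendsto (fun h : ℝ => h - M) atTop atTop :=
    tendsto_atTop_add_const_right _ _ tendsto_id
  have hinv : Tendsto (fun h : ℝ => c / h) atTop (𝓝 0) :=
    tendsto_const_nhds.div_atTop tendsto_id
  simpa only [sub_eq_add_neg] using hlin.atTop_add hinv.neg

theorem exists_pos_eq_zero_of_abs_sub_le {f : ℝ → ℝ} {c M : ℝ} (hc : 0 < c)
    (hf : ContinuousOn f (Ioi 0)) (hfg : ∀ h > 0, |f h - (h - c / h)| ≤ M) :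
    ∃ h > 0, f h = 0 := by
  have hle : ∀ h > 0, f h ≤ h + M - c / h := fun h hh => by
    linarith [le_abs_self (f h - (h - c / h)), hfg h hh]
  have hge : ∀ h > 0, h - M - c / h ≤ f h := fun h hh => by
    linarith [neg_abs_le (f h - (h - c / h)), hfg h hh]
  have hneg : f ≤ᶠ[𝓝[>] 0] fun _ => 0 := by
    filter_upwards [(tendsto_add_sub_div_nhdsGT_zero M hc).eventually_le_atBot 0,
      self_mem_nhdsWithin] with h hlt hh using (hle h hh).trans hlt
  have hpos : (fun _ => 0) ≤ᶠ[atTop] f := by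
    filter_upwards [(tendsto_sub_sub_div_atTop M c).eventually_ge_atTop 0, Ioi_mem_atTop 0]
      with h hgt hh using hgt.trans (hge h hh)
  exact isPreconnected_Ioi.intermediate_value₂_eventually₂ (l₁ := 𝓝[>] 0) inf_le_right
    (le_principal_iff.2 (Ioi_mem_atTop 0)) hf continuousOn_const hneg hpos

noncomputable def electroneutralityResidual (a b Ka Kb Kw h : ℝ) : ℝ :=
  h / (Kb + h) * b - Ka / (Ka + h) * a + h - Kw ^ 2 / h

theorem continuousOn_electroneutralityResidual (a b : ℝ) {Ka Kb : ℝ} (hKa : 0 ≤ Ka)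
    (hKb : 0 ≤ Kb) (Kw : ℝ) :
    ContinuousOn (electroneutralityResidual a b Ka Kb Kw) (Ioi 0) := by
  unfold electroneutralityResidual
  fun_prop (disch := intro h (hh : 0 < h); positivity)

theorem abs_electroneutralityResidual_sub_le (a b : ℝ) {Ka Kb : ℝ} (hKa : 0 ≤ Ka)
    (hKb : 0 ≤ Kb) (Kw : ℝ) {h : ℝ} (hh : 0 < h) :
    |electroneutralityResidual a b Ka Kb Kw h - (h - Kw ^ 2 / h)| ≤ |a| + |b| := by
  have hbase : |h / (Kb + h) * b| ≤ |b| := abs_div_mul_le_of_le b hh.le (by linarith)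
  have hacid : |Ka / (Ka + h) * a| ≤ |a| := abs_div_mul_le_of_le a hKa (by linarith)
  calc |electroneutralityResidual a b Ka Kb Kw h - (h - Kw ^ 2 / h)|
      = |h / (Kb + h) * b - Ka / (Ka + h) * a| := by unfold electroneutralityResidual; ring_nf
    _ ≤ |h / (Kb + h) * b| + |Ka / (Ka + h) * a| := abs_sub _ _
    _ ≤ |a| + |b| := by linarith

theorem stmt_8_general (a b Ka Kb Kw : ℝ) (hKa : 0 < Ka) (hKb : 0 < Kb) (hKw : 0 < Kw) :
    ∃ h : ℝ, 0 < h ∧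
      (h / (Kb + h)) * b - (Ka / (Ka + h)) * a + h - Kw ^ 2 / h = 0 :=
  exists_pos_eq_zero_of_abs_sub_le (pow_pos hKw 2)
    (continuousOn_electroneutralityResidual a b hKa.le hKb.le Kw)
    fun _ hh => abs_electroneutralityResidual_sub_le a b hKa.le hKb.le Kw hh

/-- The full electroneutrality equation for an acid-base buffer with water
autoprotolysis has at least one positive solution. -/
theorem stmt_8 (a b Ka Kb Kw : ℝ) (ha : 0 < a) (hb : 0 < b) (hKa : 0 < Ka)
    (hKb : 0 < Kb) (hKw : 0 < Kw) :
    ∃ h : ℝ, 0 < h ∧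
      (h / (Kb + h)) * b - (Ka / (Ka + h)) * a + h - Kw ^ 2 / h = 0 :=
  stmt_8_general a b Ka Kb Kw hKa hKb hKw
end
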